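/- Let F = F_{2^n}, E/F an ordinary elliptic curve (a1 ≠ 0) in Weierstrass form Y² + a1·XY + a3·Y = X³ + a2·X² + a4·X + a6. Let P1, ..., Pm ∈ E(F) \ {0} and signs s_i ∈ {-1,1} with s1·P1 + ... + sm·Pm = 0. Then Σ_{i=1}^m Tr_{F/F_2}((x(P_i) + a2)/a1²) = 0 in F_2. -/

import Mathlib

/-! Write `φ` for the map `P ↦ Tr((x(P) + a₂)/a₁²)`. In characteristic 2 the chord–tangent rule
gives `x(P + Q) + a₂ = (x(P) + a₂) + (x(Q) + a₂) + ℓ² + a₁ℓ` for the slope `ℓ`, and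
`Tr(u² + u) = 0` because the trace is invariant under Frobenius; so `φ` is a homomorphism
`E(F) → F₂`. As `x(-P) = x(P)`, `φ(±P) = φ(P)`, and applying `φ` to `∑ sᵢPᵢ = 0` gives the claim. -/

open WeierstrassCurve

/-- The map `E(F) → F₂` sending `0 ↦ 0` and an affine point `P ↦ Tr_{F/F₂}((x(P) + a₂)/a₁²)`. -/
noncomputable def ecTraceMap {n : ℕ} (E : WeierstrassCurve.Affine (GaloisField 2 n)) :
    E.Point → ZMod 2
  | .zero => 0
  | .some x _ _ => Algebra.trace (ZMod 2) (GaloisField 2 n) ((x + E.a₂) / E.a₁ ^ 2)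

theorem Algebra.trace_pow_card {K L : Type*} [Field K] [Fintype K] [Field L] [Algebra K L]
    [Algebra.IsAlgebraic K L] (x : L) :
    Algebra.trace K L (x ^ Fintype.card K) = Algebra.trace K L x :=
  Algebra.trace_eq_of_algEquiv (FiniteField.frobeniusAlgEquivOfAlgebraic K L) x

theorem Algebra.trace_sq_add_self_eq_zero {L : Type*} [Field L] [Algebra (ZMod 2) L]
    [Algebra.IsAlgebraic (ZMod 2) L] (x : L) :
    Algebra.trace (ZMod 2) L (x ^ 2 + x) = 0 := by
  have hsq := Algebra.trace_pow_card (K := ZMod 2) x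
  rw [ZMod.card] at hsq
  rw [map_add, hsq, CharTwo.add_self_eq_zero]

theorem WeierstrassCurve.Affine.addX_add_a₂_div_a₁_sq {F : Type*} [Field F] [CharP F 2]
    (W : WeierstrassCurve.Affine F) (ha₁ : W.a₁ ≠ 0) (x₁ x₂ ℓ : F) :
    (W.addX x₁ x₂ ℓ + W.a₂) / W.a₁ ^ 2 =
      (x₁ + W.a₂) / W.a₁ ^ 2 + (x₂ + W.a₂) / W.a₁ ^ 2 + ((ℓ / W.a₁) ^ 2 + ℓ / W.a₁) := by
  have h2 : (2 : F) = 0 := CharTwo.two_eq_zero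
  rw [Affine.addX]
  field_simp
  linear_combination (-(x₁ + x₂ + W.a₂)) * h2

namespace ecTraceMap

variable {n : ℕ} {E : WeierstrassCurve.Affine (GaloisField 2 n)}

@[simp]
theorem zero : ecTraceMap E 0 = 0 := rfl

@[simp]
theorem some {x y : GaloisField 2 n} (h : E.Nonsingular x y) :
    ecTraceMap E (.some x y h) =
      Algebra.trace (ZMod 2) (GaloisField 2 n) ((x + E.a₂) / E.a₁ ^ 2) := rfl

@[simp]
theorem neg (P : E.Point) : ecTraceMap E (-P) = ecTraceMap E P := by
  rcases P with _ | ⟨x, y, h⟩ <;> rfl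

open Classical in
theorem add (ha₁ : E.a₁ ≠ 0) (P Q : E.Point) :
    ecTraceMap E (P + Q) = ecTraceMap E P + ecTraceMap E Q := by
  rcases P with _ | ⟨x₁, y₁, h₁⟩
  · simp [← Affine.Point.zero_def]
  rcases Q with _ | ⟨x₂, y₂, h₂⟩
  · simp [← Affine.Point.zero_def]
  by_cases hxy : x₁ = x₂ ∧ y₁ = E.negY x₂ y₂
  · obtain ⟨rfl, hy⟩ := hxy
    rw [Affine.Point.add_of_Y_eq rfl hy]
    simp only [zero, some, CharTwo.add_self_eq_zero]
  · rw [Affine.Point.add_some hxy]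
    simp only [some]
    rw [E.addX_add_a₂_div_a₁_sq ha₁, map_add, Algebra.trace_sq_add_self_eq_zero, add_zero,
      map_add]

end ecTraceMap

section

open Classical

variable {n : ℕ} {E : WeierstrassCurve.Affine (GaloisField 2 n)}

noncomputable def ecTraceHom (ha₁ : E.a₁ ≠ 0) : E.Point →+ ZMod 2 :=
  AddMonoidHom.mk' (ecTraceMap E) (ecTraceMap.add ha₁)

@[simp]
theorem ecTraceHom_apply (ha₁ : E.a₁ ≠ 0) (P : E.Point) : ecTraceHom ha₁ P = ecTraceMap E P :=
  rfl

end

open Classical in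
theorem stmt_9_general (n : ℕ) (E : WeierstrassCurve.Affine (GaloisField 2 n))
    (ha1 : E.a₁ ≠ 0) (m : ℕ) (P : Fin m → E.Point)
    (s : Fin m → ℤ) (hs : ∀ i, s i = 1 ∨ s i = -1) (hrel : ∑ i, s i • P i = 0) :
    ∑ i, ecTraceMap E (P i) = 0 := by
  have hsign : ∀ i, ecTraceHom ha1 (s i • P i) = ecTraceMap E (P i) := fun i => by
    rcases hs i with h | h <;> simp [h]
  calc ∑ i, ecTraceMap E (P i) = ∑ i, ecTraceHom ha1 (s i • P i) := by simp only [hsign]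
    _ = ecTraceHom ha1 (∑ i, s i • P i) := (map_sum _ _ _).symm
    _ = 0 := by rw [hrel, map_zero]

open Classical in
/-- If `P₁, …, Pₘ` are nonzero points of an ordinary elliptic curve over `F = F_{2ⁿ}` with
`±P₁ ± ⋯ ± Pₘ = 0`, then `∑ᵢ Tr_{F/F₂}((x(Pᵢ) + a₂)/a₁²) = 0`. -/
theorem stmt_9 (n : ℕ) (hn : n ≠ 0) (E : WeierstrassCurve.Affine (GaloisField 2 n))
    (hΔ : E.Δ ≠ 0) (ha1 : E.a₁ ≠ 0) (m : ℕ) (P : Fin m → E.Point) (hP : ∀ i, P i ≠ 0)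
    (s : Fin m → ℤ) (hs : ∀ i, s i = 1 ∨ s i = -1) (hrel : ∑ i, s i • P i = 0) :
    ∑ i, ecTraceMap E (P i) = 0 :=
  stmt_9_general n E ha1 m P s hs hrel
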